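/- arXiv:2204.13680 — 5 statements merged into one kernel-verified Lean document; each statement's English description precedes it below -/
import Mathlib

section
/- Consider the discrete-time LTI system x_{t+1} = A x_t + B u_t, y_t = C x_t + D u_t. Suppose (A,B) is controllable and (A,C) is observable, {u^d_k, y^d_k}_{k=0}^{N-1} is a trajectory of the system, and the input sequence u^d is persistently exciting of order L+n. Then a sequence {\bar u_k, \bar y_k}_{k=0}^{L-1} is a trajectory of the system if and only if there exists α ∈ ℝ^{N-L+1} such that H_L(u^d) α = \bar u and H_L(y^d) α = \bar y (Willems' fundamental lemma, Theorem 1). -/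
open Matrix Finset

/- ## Auxiliary linear algebra lemmas -/

lemma left_ker_of_rank {ι κ : Type*} [Fintype ι] [Fintype κ] (M : Matrix ι κ ℝ)
    (h : M.rank = Fintype.card ι) : ∀ w, Matrix.vecMul w M = 0 → w = 0 := by
  intro w hw
  have h1 : Mᵀ.rank = Fintype.card ι := by rw [Matrix.rank_transpose]; exact h
  have h2 : Module.finrank ℝ (LinearMap.range Mᵀ.mulVecLin) = Fintype.card ι := by
    rw [← Matrix.rank]; exact h1
  have h3 := LinearMap.finrank_range_add_finrank_ker Mᵀ.mulVecLin
  rw [h2, Module.finrank_fintype_fun_eq_card] at h3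
  have h4 : Module.finrank ℝ (LinearMap.ker Mᵀ.mulVecLin) = 0 := by omega
  have h5 : LinearMap.ker Mᵀ.mulVecLin = ⊥ := Submodule.finrank_eq_zero.mp h4
  have hmem : w ∈ LinearMap.ker Mᵀ.mulVecLin := by
    simp [LinearMap.mem_ker, Matrix.mulVecLin_apply, Matrix.mulVec_transpose, hw]
  rw [h5, Submodule.mem_bot] at hmem; exact hmem

lemma surj_of_left_ker {ι κ : Type*} [Fintype ι] [Fintype κ] (M : Matrix ι κ ℝ)
    (h : ∀ w, Matrix.vecMul w M = 0 → w = 0) : Function.Surjective M.mulVec := by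
  have hinj : Function.Injective Mᵀ.mulVecLin := by
    rw [← LinearMap.ker_eq_bot, Submodule.eq_bot_iff]
    intro w hw
    exact h w (by simpa [Matrix.mulVecLin_apply, Matrix.mulVec_transpose] using hw)
  have h1 : Mᵀ.rank = Fintype.card ι := by
    rw [Matrix.rank, LinearMap.finrank_range_of_inj hinj, Module.finrank_fintype_fun_eq_card]
  have h2 : M.rank = Fintype.card ι := by rw [← Matrix.rank_transpose]; exact h1
  have h3 : LinearMap.range M.mulVecLin = ⊤ := by
    apply Submodule.eq_top_of_finrank_eq
    rw [← Matrix.rank, h2, Module.finrank_fintype_fun_eq_card]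
  intro b
  obtain ⟨a, ha⟩ := LinearMap.range_eq_top.mp h3 b
  exact ⟨a, ha⟩

lemma dot_sum {q : ℕ} {ι : Type*} (s : Finset ι) (v : Fin q → ℝ) (w : ι → Fin q → ℝ) :
    v ⬝ᵥ (∑ i ∈ s, w i) = ∑ i ∈ s, v ⬝ᵥ w i := by
  simp only [dotProduct, Finset.sum_apply, Finset.mul_sum]
  exact Finset.sum_comm

lemma ch_dot {n : ℕ} (η v : Fin n → ℝ) (c : ℕ → ℝ) (A : Matrix (Fin n) (Fin n) ℝ)
    (h : ∑ s ∈ Finset.range (n+1), c s • (A ^ s) = 0) :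
    ∑ s ∈ Finset.range (n+1), c s * (η ⬝ᵥ ((A ^ s) *ᵥ v)) = 0 := by
  have hzero : ∀ a b, ∑ s ∈ Finset.range (n+1), c s * (A ^ s) a b = 0 := by
    intro a b
    have := congrFun (congrFun h a) b
    simpa [Finset.sum_apply, Matrix.sum_apply] using this
  have key : ∀ a, ∑ s ∈ Finset.range (n+1), c s * ((A ^ s) *ᵥ v) a = 0 := by
    intro a
    have h1 : ∑ s ∈ Finset.range (n+1), c s * ((A ^ s) *ᵥ v) a
        = ∑ b, (∑ s ∈ Finset.range (n+1), c s * (A ^ s) a b) * v b := by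
      simp only [Matrix.mulVec, dotProduct, Finset.mul_sum, Finset.sum_mul]
      rw [Finset.sum_comm]
      exact Finset.sum_congr rfl fun s _ => Finset.sum_congr rfl fun b _ => by ring
    rw [h1]; simp [hzero]
  have h2 : ∑ s ∈ Finset.range (n+1), c s * (η ⬝ᵥ ((A ^ s) *ᵥ v))
      = ∑ a, η a * (∑ s ∈ Finset.range (n+1), c s * ((A ^ s) *ᵥ v) a) := by
    simp only [dotProduct, Finset.mul_sum]
    rw [Finset.sum_comm]
    exact Finset.sum_congr rfl fun a _ => Finset.sum_congr rfl fun s _ => by ring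
  rw [h2]; simp [key]

lemma mulVec_comb {a b : ℕ} {J : Type*} [Fintype J] (M : Matrix (Fin a) (Fin b) ℝ)
    (α : J → ℝ) (v : J → Fin b → ℝ) (l : Fin a) :
    (M *ᵥ (fun i => ∑ j, α j * v j i)) l = ∑ j, α j * (M *ᵥ v j) l := by
  simp only [Matrix.mulVec, dotProduct, Finset.mul_sum]
  rw [Finset.sum_comm]
  exact Finset.sum_congr rfl fun j _ => Finset.sum_congr rfl fun i _ => by ring

theorem test_sigs : True := trivial

/-- A sequence `{u_k, y_k}_{k=0}^{L-1}` is a trajectory of the discrete-time LTI system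
`x_{t+1} = A x_t + B u_t`, `y_t = C x_t + D u_t`. -/
def IsTraj {n m p : ℕ} (A : Matrix (Fin n) (Fin n) ℝ) (B : Matrix (Fin n) (Fin m) ℝ)
    (C : Matrix (Fin p) (Fin n) ℝ) (D : Matrix (Fin p) (Fin m) ℝ)
    (L : ℕ) (u : ℕ → Fin m → ℝ) (y : ℕ → Fin p → ℝ) : Prop :=
  ∃ x : ℕ → Fin n → ℝ,
    (∀ k, k + 1 < L → x (k + 1) = A.mulVec (x k) + B.mulVec (u k)) ∧
    (∀ k, k < L → y k = C.mulVec (x k) + D.mulVec (u k))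

/-- Hankel matrix of depth `L` of a sequence `{z_k}_{k=0}^{N-1}` in `ℝ^q`:
the `(i,j)`-th `q × 1` block is `z_{i+j}`. -/
def hankel {q : ℕ} (L N : ℕ) (z : ℕ → Fin q → ℝ) :
    Matrix (Fin L × Fin q) (Fin (N - L + 1)) ℝ :=
  fun ia j => z (ia.1.val + j.val) ia.2

/-- `k`-step controllability matrix `[B AB … A^{k-1}B]`. -/
def ctrbMat {n m : ℕ} (A : Matrix (Fin n) (Fin n) ℝ) (B : Matrix (Fin n) (Fin m) ℝ)
    (k : ℕ) : Matrix (Fin n) (Fin k × Fin m) ℝ :=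
  fun i jc => (A ^ (jc.1 : ℕ) * B) i jc.2

/-- `k`-step observability matrix `[C; CA; …; CA^{k-1}]`. -/
def obsvMat {n p : ℕ} (A : Matrix (Fin n) (Fin n) ℝ) (C : Matrix (Fin p) (Fin n) ℝ)
    (k : ℕ) : Matrix (Fin k × Fin p) (Fin n) ℝ :=
  fun ij l => (C * A ^ (ij.1 : ℕ)) ij.2 l

lemma hankel_mulVec {q L N : ℕ} (z : ℕ → Fin q → ℝ) (α : Fin (N - L + 1) → ℝ)
    (k : Fin L) (i : Fin q) :
    (hankel L N z).mulVec α (k, i) = ∑ j, α j * z ((k : ℕ) + (j : ℕ)) i := by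
  simp only [hankel, Matrix.mulVec, dotProduct]
  exact Finset.sum_congr rfl fun j _ => by ring

/-- **Willems' fundamental lemma.**  If `(A,B)` is controllable, `(A,C)` is observable,
`{u^d_k, y^d_k}_{k=0}^{N-1}` is a trajectory of the system and `u^d` is persistently exciting
of order `L + n`, then `{ū_k, ȳ_k}_{k=0}^{L-1}` is a trajectory of the system if and only if
there exists `α ∈ ℝ^{N-L+1}` with `H_L(u^d) α = ū` and `H_L(y^d) α = ȳ`. -/
theorem fundamental_lemma {n m p N L : ℕ} (hL : 1 ≤ L) (hLN : L + n ≤ N)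
    (A : Matrix (Fin n) (Fin n) ℝ) (B : Matrix (Fin n) (Fin m) ℝ)
    (C : Matrix (Fin p) (Fin n) ℝ) (D : Matrix (Fin p) (Fin m) ℝ)
    (hctrb : (ctrbMat A B n).rank = n) (hobsv : (obsvMat A C n).rank = n)
    (ud : ℕ → Fin m → ℝ) (yd : ℕ → Fin p → ℝ)
    (hdata : IsTraj A B C D N ud yd)
    (hpe : (hankel (L + n) N ud).rank = m * (L + n))
    (ubar : ℕ → Fin m → ℝ) (ybar : ℕ → Fin p → ℝ) :
    IsTraj A B C D L ubar ybar ↔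
      ∃ α : Fin (N - L + 1) → ℝ,
        (∀ k : Fin L, ∀ i, ubar k i = (hankel L N ud).mulVec α (k, i)) ∧
        (∀ k : Fin L, ∀ i, ybar k i = (hankel L N yd).mulVec α (k, i)) := by
  obtain ⟨xd, hxd, hyd⟩ := hdata
  -- state evolution formula for the data trajectory
  have hstate : ∀ s j, j + s < N → xd (j + s) =
      (A ^ s) *ᵥ xd j + ∑ t ∈ Finset.range s, ((A ^ (s - 1 - t) * B) *ᵥ ud (j + t)) := by
    intro s
    induction s with
    | zero => intro j hj; simp
    | succ s ih =>
      intro j hj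
      have h1 : xd (j + (s+1)) = A *ᵥ xd (j + s) + B *ᵥ ud (j + s) := by
        have := hxd (j + s) (by omega)
        rw [show j + (s+1) = (j + s) + 1 by omega]
        exact this
      rw [h1, ih j (by omega), Finset.sum_range_succ]
      have hlin : A *ᵥ ((A ^ s) *ᵥ xd j + ∑ t ∈ Finset.range s, ((A ^ (s - 1 - t) * B) *ᵥ ud (j + t)))
          = (A ^ (s+1)) *ᵥ xd j + ∑ t ∈ Finset.range s, ((A * (A ^ (s - 1 - t) * B)) *ᵥ ud (j + t)) := by
        rw [Matrix.mulVec_add]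
        congr 1
        · rw [Matrix.mulVec_mulVec, ← pow_succ']
        · rw [← Matrix.mulVecLin_apply, map_sum]
          refine Finset.sum_congr rfl fun t ht => ?_
          rw [Matrix.mulVecLin_apply, Matrix.mulVec_mulVec]
      rw [hlin]
      have hexp : ∀ t ∈ Finset.range s, (A * (A ^ (s - 1 - t) * B)) *ᵥ ud (j + t)
          = (A ^ (s + 1 - 1 - t) * B) *ᵥ ud (j + t) := by
        intro t ht
        have : A * (A ^ (s - 1 - t) * B) = A ^ (s - t) * B := by
          rw [← Matrix.mul_assoc, ← pow_succ']
          congr 2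
          have := Finset.mem_range.mp ht
          omega
        rw [this, Nat.succ_sub_one]
      rw [Finset.sum_congr rfl hexp]
      simp only [Nat.succ_sub_one, Nat.sub_self, pow_zero, Matrix.one_mul]
      abel
  -- combination of shifted data windows is again (locally) a trajectory
  have hcomb_step : ∀ (α : Fin (N - L + 1) → ℝ) (k : ℕ), k + 1 < L →
      (fun l => ∑ j, α j * xd ((k+1) + (j : ℕ)) l) =
        A *ᵥ (fun l => ∑ j, α j * xd (k + (j : ℕ)) l)
        + B *ᵥ (fun i => ∑ j, α j * ud (k + (j : ℕ)) i) := by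
    intro α k hk
    funext l
    have hterm : ∀ j : Fin (N - L + 1),
        xd ((k+1) + (j : ℕ)) l = (A *ᵥ xd (k + (j : ℕ))) l + (B *ᵥ ud (k + (j : ℕ))) l := by
      intro j
      have hj : (j : ℕ) ≤ N - L := by have := j.isLt; omega
      have := hxd (k + (j : ℕ)) (by omega)
      rw [show (k+1) + (j : ℕ) = (k + (j : ℕ)) + 1 by omega, this]
      rfl
    calc ∑ j, α j * xd ((k+1) + (j : ℕ)) l
        = ∑ j, (α j * (A *ᵥ xd (k + (j : ℕ))) l + α j * (B *ᵥ ud (k + (j : ℕ))) l) := by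
          refine Finset.sum_congr rfl fun j _ => ?_
          rw [hterm j]; ring
      _ = (∑ j, α j * (A *ᵥ xd (k + (j : ℕ))) l) + ∑ j, α j * (B *ᵥ ud (k + (j : ℕ))) l :=
          Finset.sum_add_distrib
      _ = _ := by
          rw [Pi.add_apply, mulVec_comb, mulVec_comb]
  have hcomb_out : ∀ (α : Fin (N - L + 1) → ℝ) (k : ℕ), k < L →
      (fun i => ∑ j, α j * yd (k + (j : ℕ)) i) =
        C *ᵥ (fun l => ∑ j, α j * xd (k + (j : ℕ)) l)
        + D *ᵥ (fun i => ∑ j, α j * ud (k + (j : ℕ)) i) := by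
    intro α k hk
    funext i
    have hterm : ∀ j : Fin (N - L + 1),
        yd (k + (j : ℕ)) i = (C *ᵥ xd (k + (j : ℕ))) i + (D *ᵥ ud (k + (j : ℕ))) i := by
      intro j
      have hj : (j : ℕ) ≤ N - L := by have := j.isLt; omega
      have := hyd (k + (j : ℕ)) (by omega)
      rw [this]; rfl
    calc ∑ j, α j * yd (k + (j : ℕ)) i
        = ∑ j, (α j * (C *ᵥ xd (k + (j : ℕ))) i + α j * (D *ᵥ ud (k + (j : ℕ))) i) := by
          refine Finset.sum_congr rfl fun j _ => ?_
          rw [hterm j]; ring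
      _ = (∑ j, α j * (C *ᵥ xd (k + (j : ℕ))) i) + ∑ j, α j * (D *ᵥ ud (k + (j : ℕ))) i :=
          Finset.sum_add_distrib
      _ = _ := by
          rw [Pi.add_apply, mulVec_comb, mulVec_comb]
  constructor
  · -- hard direction
    rintro ⟨xb, hxb, hyb⟩
    set Mmat : Matrix ((Fin L × Fin m) ⊕ Fin n) (Fin (N - L + 1)) ℝ :=
      fun r j => Sum.elim (fun ki : Fin L × Fin m => ud ((ki.1 : ℕ) + (j : ℕ)) ki.2)
        (fun l => xd (j : ℕ) l) r with hMmat
    have hfull : ∀ w, Matrix.vecMul w Mmat = 0 → w = 0 := by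
      intro w hw
      set ξ' : ℕ → Fin m → ℝ := fun k i => if h : k < L then w (Sum.inl (⟨k, h⟩, i)) else 0
        with hxi'
      set η : Fin n → ℝ := fun l => w (Sum.inr l) with hηdef
      have hw0 : ∀ j, j ≤ N - L →
          (∑ k ∈ Finset.range L, ξ' k ⬝ᵥ ud (k + j)) + η ⬝ᵥ xd j = 0 := by
        intro j hj
        have h0 := congrFun hw ⟨j, by omega⟩
        simp only [Matrix.vecMul, dotProduct, Fintype.sum_sum_type,
          Fintype.sum_prod_type, hMmat, Sum.elim_inl, Sum.elim_inr, Pi.zero_apply] at h0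
        rw [← h0]
        congr 1
        rw [Finset.sum_range]
        refine Finset.sum_congr rfl fun k _ => ?_
        simp [dotProduct, hxi', Fin.eta]
      set c : ℕ → ℝ := fun s => (Matrix.charpoly A).coeff s with hcdef
      have hdeg : (Matrix.charpoly A).natDegree = n := by
        rw [Matrix.charpoly_natDegree_eq_dim, Fintype.card_fin]
      have hcn : c n = 1 := by
        have := (Matrix.charpoly_monic A).coeff_natDegree
        rwa [hdeg] at this
      have hCH : ∑ s ∈ Finset.range (n+1), c s • (A ^ s) = 0 := by
        have h := Matrix.aeval_self_charpoly A
        rw [Polynomial.aeval_eq_sum_range, hdeg] at h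
        exact h
      have hE : ∀ j s, j ≤ N - L - n → s ≤ n →
          (∑ k ∈ Finset.range L, ξ' k ⬝ᵥ ud (k + (j + s)))
            + (∑ t ∈ Finset.range s, η ⬝ᵥ ((A ^ (s - 1 - t) * B) *ᵥ ud (j + t)))
            + η ⬝ᵥ ((A ^ s) *ᵥ xd j) = 0 := by
        intro j s hj hs
        have h1 := hw0 (j + s) (by omega)
        have h2 := hstate s j (by omega)
        rw [h2, dotProduct_add, dot_sum] at h1
        linarith [h1]
      have hsum : ∀ j, j ≤ N - L - n →
          ∑ s ∈ Finset.range (n+1), c s *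
            ((∑ k ∈ Finset.range L, ξ' k ⬝ᵥ ud (k + (j + s)))
              + ∑ t ∈ Finset.range s, η ⬝ᵥ ((A ^ (s - 1 - t) * B) *ᵥ ud (j + t))) = 0 := by
        intro j hj
        have hterm : ∀ s ∈ Finset.range (n+1),
            c s * ((∑ k ∈ Finset.range L, ξ' k ⬝ᵥ ud (k + (j + s)))
              + ∑ t ∈ Finset.range s, η ⬝ᵥ ((A ^ (s - 1 - t) * B) *ᵥ ud (j + t)))
            = -(c s * (η ⬝ᵥ ((A ^ s) *ᵥ xd j))) := by
          intro s hs
          have h1 := hE j s hj (Nat.lt_succ_iff.mp (Finset.mem_range.mp hs))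
          have heq : (∑ k ∈ Finset.range L, ξ' k ⬝ᵥ ud (k + (j + s)))
              + ∑ t ∈ Finset.range s, η ⬝ᵥ ((A ^ (s - 1 - t) * B) *ᵥ ud (j + t))
              = -(η ⬝ᵥ ((A ^ s) *ᵥ xd j)) := by linarith
          rw [heq]; ring
        rw [Finset.sum_congr rfl hterm, Finset.sum_neg_distrib,
          ch_dot η (xd j) c A hCH, neg_zero]
      set g : ℕ → ℕ → Fin m → ℝ := fun s r i =>
        if r < s then Matrix.vecMul η (A ^ (s - 1 - r) * B) i else ξ' (r - s) i with hgdef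
      set ζ : Fin (L + n) × Fin m → ℝ :=
        fun ri => ∑ s ∈ Finset.range (n+1), c s * g s (ri.1 : ℕ) ri.2 with hzdef
      have hζker : Matrix.vecMul ζ (hankel (L + n) N ud) = 0 := by
        funext j
        have hjb : (j : ℕ) ≤ N - L - n := by have := j.isLt; omega
        have hinner : ∀ s, s ≤ n →
            ∑ r ∈ Finset.range (L + n), ∑ i, g s r i * ud (r + (j : ℕ)) i
              = (∑ k ∈ Finset.range L, ξ' k ⬝ᵥ ud (k + ((j : ℕ) + s)))
                + ∑ t ∈ Finset.range s, η ⬝ᵥ ((A ^ (s - 1 - t) * B) *ᵥ ud ((j : ℕ) + t)) := by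
          intro s hs
          have hsub : ∑ r ∈ Finset.range (L + n), ∑ i, g s r i * ud (r + (j : ℕ)) i
              = ∑ r ∈ Finset.range (s + L), ∑ i, g s r i * ud (r + (j : ℕ)) i := by
            refine (Finset.sum_subset (Finset.range_subset_range.mpr (by omega))
              (fun r _ hr => ?_)).symm
            have hr1 : s + L ≤ r := by
              by_contra hcon
              exact hr (Finset.mem_range.mpr (by omega))
            have hg0 : ∀ i, g s r i = 0 := by
              intro i
              have h1 : ¬ r < s := by omega
              have h2 : ¬ r - s < L := by omega
              simp [hgdef, h1, hxi', h2]
            simp [hg0]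
          rw [hsub]
          have hsplit : ∑ r ∈ Finset.range (s + L), ∑ i, g s r i * ud (r + (j : ℕ)) i
              = (∑ r ∈ Finset.range s, ∑ i, g s r i * ud (r + (j : ℕ)) i)
                + ∑ r ∈ Finset.Ico s (s + L), ∑ i, g s r i * ud (r + (j : ℕ)) i := by
            rw [Finset.range_eq_Ico, ← Finset.sum_Ico_consecutive _ (Nat.zero_le s)
              (Nat.le_add_right s L), ← Finset.range_eq_Ico]
          rw [hsplit]
          rw [add_comm]
          congr 1
          · -- Ico part = ξ' part
            rw [Finset.sum_Ico_eq_sum_range]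
            simp only [Nat.add_sub_cancel_left]
            refine Finset.sum_congr rfl fun k hk => ?_
            have h1 : ¬ s + k < s := by omega
            have h2 : s + k - s = k := by omega
            have h3 : s + k + (j : ℕ) = k + ((j : ℕ) + s) := by omega
            simp only [hgdef, h1, if_false, h2, h3]
            rfl
          · -- range s part = η part
            refine Finset.sum_congr rfl fun r hr => ?_
            have h1 : r < s := Finset.mem_range.mp hr
            have h2 : r + (j : ℕ) = (j : ℕ) + r := by omega
            simp only [hgdef, h1, if_true, h2]
            rw [Matrix.dotProduct_mulVec]
            rfl
        have hexp : Matrix.vecMul ζ (hankel (L + n) N ud) j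
            = ∑ s ∈ Finset.range (n+1), c s *
                (∑ r ∈ Finset.range (L + n), ∑ i, g s r i * ud (r + (j : ℕ)) i) := by
          calc Matrix.vecMul ζ (hankel (L + n) N ud) j
              = ∑ r ∈ Finset.range (L + n), ∑ i,
                  (∑ s ∈ Finset.range (n+1), c s * g s r i) * ud (r + (j : ℕ)) i := by
                simp only [Matrix.vecMul, dotProduct, Fintype.sum_prod_type,
                  hankel, hzdef]
                rw [Finset.sum_range]
            _ = ∑ r ∈ Finset.range (L + n), ∑ i,
                  ∑ s ∈ Finset.range (n+1), c s * (g s r i * ud (r + (j : ℕ)) i) := by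
                refine Finset.sum_congr rfl fun r _ => Finset.sum_congr rfl fun i _ => ?_
                rw [Finset.sum_mul]
                exact Finset.sum_congr rfl fun s _ => by ring
            _ = ∑ r ∈ Finset.range (L + n), ∑ s ∈ Finset.range (n+1),
                  ∑ i, c s * (g s r i * ud (r + (j : ℕ)) i) := by
                exact Finset.sum_congr rfl fun r _ => Finset.sum_comm
            _ = ∑ s ∈ Finset.range (n+1), ∑ r ∈ Finset.range (L + n),
                  ∑ i, c s * (g s r i * ud (r + (j : ℕ)) i) := Finset.sum_comm
            _ = _ := by
                refine Finset.sum_congr rfl fun s _ => ?_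
                rw [Finset.mul_sum]
                exact Finset.sum_congr rfl fun r _ => by rw [Finset.mul_sum]
        have h9 : ∑ s ∈ Finset.range (n+1), c s *
              (∑ r ∈ Finset.range (L + n), ∑ i, g s r i * ud (r + (j : ℕ)) i)
            = ∑ s ∈ Finset.range (n+1), c s *
              ((∑ k ∈ Finset.range L, ξ' k ⬝ᵥ ud (k + ((j : ℕ) + s)))
                + ∑ t ∈ Finset.range s, η ⬝ᵥ ((A ^ (s - 1 - t) * B) *ᵥ ud ((j : ℕ) + t))) :=
          Finset.sum_congr rfl fun s hs => by
            rw [hinner s (Nat.lt_succ_iff.mp (Finset.mem_range.mp hs))]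
        rw [hexp, h9]
        simpa using hsum (j : ℕ) hjb
      have hζ0 : ζ = 0 := left_ker_of_rank _
        (by simp only [Fintype.card_prod, Fintype.card_fin, hpe]; ring) ζ hζker
      have hζc : ∀ r, r < L + n → ∀ i, ∑ s ∈ Finset.range (n+1), c s * g s r i = 0 := by
        intro r hr i
        have := congrFun hζ0 (⟨r, hr⟩, i)
        simpa [hzdef] using this
      have hξzero : ∀ d k, L - k ≤ d → ξ' k = 0 := by
        intro d
        induction d with
        | zero =>
          intro k hk
          funext i
          have h1 : ¬ k < L := by omega
          simp [hxi', h1]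
        | succ d ih =>
          intro k hk
          by_cases hkL : k < L
          · funext i
            have h1 := hζc (k + n) (by omega) i
            rw [Finset.sum_range_succ] at h1
            have h2 : g n (k + n) i = ξ' k i := by
              have h3 : ¬ k + n < n := by omega
              simp [hgdef, h3, Nat.add_sub_cancel]
            have h4 : ∀ s ∈ Finset.range n, c s * g s (k + n) i = 0 := by
              intro s hs
              have hs' := Finset.mem_range.mp hs
              have h5 : ¬ k + n < s := by omega
              have h6 : ξ' (k + n - s) = 0 := ih (k + n - s) (by omega)
              simp [hgdef, h5, h6]
            rw [Finset.sum_congr rfl h4] at h1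
            simp only [Finset.sum_const_zero, zero_add, h2, hcn, one_mul] at h1
            have : ξ' k i = 0 := h1
            simp [this]
          · funext i
            simp [hxi', hkL]
      have hξ0 : ∀ k, ξ' k = 0 := fun k => hξzero L k (by omega)
      have hηAB : ∀ k, k < n → Matrix.vecMul η (A ^ k * B) = 0 := by
        intro k
        induction k using Nat.strong_induction_on with
        | _ k ih =>
          intro hkn
          funext i
          have h1 := hζc (n - 1 - k) (by omega) i
          rw [Finset.sum_range_succ] at h1
          have h2 : g n (n - 1 - k) i = Matrix.vecMul η (A ^ k * B) i := by
            have h3 : n - 1 - k < n := by omega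
            have h4 : n - 1 - (n - 1 - k) = k := by omega
            simp [hgdef, h3, h4]
          have h5 : ∀ s ∈ Finset.range n, c s * g s (n - 1 - k) i = 0 := by
            intro s hs
            have hs' := Finset.mem_range.mp hs
            by_cases h6 : n - 1 - k < s
            · have h7 : s - 1 - (n - 1 - k) < k := by omega
              have h8 := ih (s - 1 - (n - 1 - k)) h7 (by omega)
              simp [hgdef, h6, h8]
            · simp [hgdef, h6, hξ0]
          rw [Finset.sum_congr rfl h5] at h1
          simp only [Finset.sum_const_zero, zero_add, h2, hcn, one_mul] at h1
          simp [h1]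
      have hη0 : η = 0 := by
        apply left_ker_of_rank (ctrbMat A B n) (by rw [hctrb, Fintype.card_fin])
        funext jc
        have := congrFun (hηAB jc.1 jc.1.isLt) jc.2
        simpa [Matrix.vecMul, dotProduct, ctrbMat] using this
      funext r
      cases r with
      | inl ki =>
        have := congrFun (hξ0 ki.1) ki.2
        simpa [hxi', ki.1.isLt, Fin.eta] using this
      | inr l => exact congrFun hη0 l
    obtain ⟨α, hα⟩ := surj_of_left_ker Mmat hfull
      (Sum.elim (fun ki : Fin L × Fin m => ubar ki.1 ki.2) (xb 0))
    have hu' : ∀ (k : Fin L) (i : Fin m), ∑ j, α j * ud ((k : ℕ) + (j : ℕ)) i = ubar k i := by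
      intro k i
      have := congrFun hα (Sum.inl (k, i))
      simp only [Matrix.mulVec, dotProduct, hMmat, Sum.elim_inl] at this
      rw [← this]
      exact Finset.sum_congr rfl fun j _ => by ring
    have hx0 : (fun l => ∑ j, α j * xd (0 + (j : ℕ)) l) = xb 0 := by
      funext l
      have := congrFun hα (Sum.inr l)
      simp only [Matrix.mulVec, dotProduct, hMmat, Sum.elim_inr] at this
      rw [← this]
      exact Finset.sum_congr rfl fun j _ => by rw [zero_add]; ring
    have hxeq : ∀ k, k < L → (fun l => ∑ j, α j * xd (k + (j : ℕ)) l) = xb k := by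
      intro k
      induction k with
      | zero => intro _; exact hx0
      | succ k ih =>
        intro hk
        have hkL : k < L := by omega
        have hub : (fun i => ∑ j, α j * ud (k + (j : ℕ)) i) = ubar k :=
          funext fun i => hu' ⟨k, hkL⟩ i
        rw [hcomb_step α k hk, ih hkL, hub, ← hxb k hk]
    refine ⟨α, ?_, ?_⟩
    · intro k i
      rw [hankel_mulVec]
      exact (hu' k i).symm
    · intro k i
      rw [hankel_mulVec]
      have hub : (fun i => ∑ j, α j * ud ((k : ℕ) + (j : ℕ)) i) = ubar (k : ℕ) :=
        funext fun i => hu' k i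
      have h1 := congrFun (hcomb_out α (k : ℕ) k.isLt) i
      rw [h1, hxeq (k : ℕ) k.isLt, hub, ← hyb (k : ℕ) k.isLt]
  · -- easy direction
    rintro ⟨α, hu, hy⟩
    have hubar : ∀ k, k < L → ubar k = fun i => ∑ j, α j * ud (k + (j : ℕ)) i := by
      intro k hk
      funext i
      have := hu ⟨k, hk⟩ i
      rwa [hankel_mulVec] at this
    refine ⟨fun k => fun l => ∑ j, α j * xd (k + (j : ℕ)) l, ?_, ?_⟩
    · intro k hk
      beta_reduce
      rw [hcomb_step α k hk, hubar k (by omega)]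
    · intro k hk
      have hybar : ybar k = fun i => ∑ j, α j * yd (k + (j : ℕ)) i := by
        funext i
        have := hy ⟨k, hk⟩ i
        rwa [hankel_mulVec] at this
      beta_reduce
      rw [hybar, hcomb_out α k hk, hubar k hk]
end

section
/- Consider the discrete-time LTI system x_{t+1} = A x_t + B u_t, y_t = C x_t + D u_t with (A,B) controllable and (A,C) observable. Suppose {u^d_k, y^d_k}_{k=0}^{N-1} is a trajectory of the system and u^d is persistently exciting of order 2n+1. Then an input-output pair (u^s, y^s) ∈ ℝ^m × ℝ^p is an equilibrium of the system if and only if there exists ν ∈ ℝ^{N-n} such that H_{n+1}(u^d) ν = 1_{n+1} ⊗ u^s and H_{n+1}(y^d) ν = 1_{n+1} ⊗ y^s, i.e., if and only if the stacked vector (1_{n+1} ⊗ u^s, 1_{n+1} ⊗ y^s) lies in the column space of the matrix [H_{n+1}(u^d); H_{n+1}(y^d)] (Lemma 1, data-driven characterization of the steady-state manifold). -/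
/-- `(u^s, y^s)` is an equilibrium of the system iff the constant sequence of length `n+1`
consisting of `(u^s, y^s)` is a trajectory of the system. -/
def IsEquilibrium {n m p : ℕ} (A : Matrix (Fin n) (Fin n) ℝ) (B : Matrix (Fin n) (Fin m) ℝ)
    (C : Matrix (Fin p) (Fin n) ℝ) (D : Matrix (Fin p) (Fin m) ℝ)
    (us : Fin m → ℝ) (ys : Fin p → ℝ) : Prop :=
  IsTraj A B C D (n + 1) (fun _ => us) (fun _ => ys)

/-!
Every combination `∑ j, ν j • σ^j (u^d, y^d)` of time-shifted data windows is again a trajectory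
(with state `∑ j, ν j • σ^j x^d`), so a `ν` as in the statement produces the constant trajectory.

Conversely, the matrix `[H_{n+1}(u^d); X]` with `X = [x_0 ⋯ x_{N-n-1}]` has full row rank
(Willems' fundamental lemma). A left-kernel vector `(ξ, η)` gives a relation
`∑ i, ξ i ⬝ u_{i+j} + η ⬝ x_j = 0`; read at time `j + k` and pushed back to `x_j` by the state
equation, its state coefficient becomes `η A^k`. Combining these relations with the coefficients of
the characteristic polynomial of `A` kills the state term by Cayley–Hamilton, leaving a left-kernel
vector of `H_{2n+1}(u^d)`, which vanishes by persistency of excitation. The resulting triangular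
system forces `ξ = 0` and `η A^r B = 0` for `r < n`, hence `η = 0` by controllability. So `ν` can be
chosen to reproduce both the constant input and the initial state of the equilibrium, and the
outputs agree because a trajectory is determined by its input and initial state.
-/

open Matrix Finset Function

namespace Matrix

variable {K ι κ : Type*} [Field K] [Fintype ι] [Fintype κ]

theorem vecMul_injective_of_rank_eq_card (M : Matrix ι κ K) (h : M.rank = Fintype.card ι) :
    Injective M.vecMul := by
  rw [vecMul_injective_iff, linearIndependent_iff_card_eq_finrank_span, Set.finrank,
    ← rank_eq_finrank_span_row, h]

theorem mulVec_surjective_of_vecMul_injective (M : Matrix ι κ K) (h : Injective M.vecMul) :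
    Surjective M.mulVec := by
  have hrange : LinearMap.range M.mulVecLin = ⊤ := Submodule.eq_top_of_finrank_eq <| by
    rw [Module.finrank_fintype_fun_eq_card]
    exact (vecMul_injective_iff.mp h).rank_matrix
  exact LinearMap.range_eq_top.mp hrange

theorem exists_monic_sum_smul_pow_eq_zero {R : Type*} [CommRing R] [Nontrivial R] [DecidableEq ι]
    (A : Matrix ι ι R) :
    ∃ c : ℕ → R, c (Fintype.card ι) = 1 ∧
      ∑ k ∈ range (Fintype.card ι + 1), c k • A ^ k = 0 := by
  have hdeg : A.charpoly.natDegree = Fintype.card ι := charpoly_natDegree_eq_dim A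
  refine ⟨A.charpoly.coeff, ?_, ?_⟩
  · simpa only [Polynomial.leadingCoeff, hdeg] using A.charpoly_monic.leadingCoeff
  · simpa only [aeval_self_charpoly, hdeg] using
      (Polynomial.aeval_eq_sum_range (p := A.charpoly) A).symm

end Matrix

section Trajectory

variable {n m p : ℕ} (A : Matrix (Fin n) (Fin n) ℝ) (B : Matrix (Fin n) (Fin m) ℝ)
  (C : Matrix (Fin p) (Fin n) ℝ) (D : Matrix (Fin p) (Fin m) ℝ)

def IsStateTraj (L : ℕ) (x : ℕ → Fin n → ℝ) (u : ℕ → Fin m → ℝ) (y : ℕ → Fin p → ℝ) : Prop :=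
  (∀ k, k + 1 < L → x (k + 1) = A *ᵥ x k + B *ᵥ u k) ∧ (∀ k, k < L → y k = C *ᵥ x k + D *ᵥ u k)

def shiftComb {q M : ℕ} (ν : Fin M → ℝ) (z : ℕ → Fin q → ℝ) : ℕ → Fin q → ℝ :=
  fun k => ∑ j, ν j • z (k + j)

variable {A B C D}

theorem IsStateTraj.shiftComb {L M N : ℕ} {x : ℕ → Fin n → ℝ} {u : ℕ → Fin m → ℝ}
    {y : ℕ → Fin p → ℝ} (h : IsStateTraj A B C D N x u y) (hLM : L + M ≤ N + 1)
    (ν : Fin M → ℝ) :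
    IsStateTraj A B C D L (shiftComb ν x) (shiftComb ν u) (shiftComb ν y) := by
  constructor
  · intro k hk
    simp only [_root_.shiftComb, mulVec_sum, mulVec_smul, ← smul_add, ← sum_add_distrib]
    refine sum_congr rfl fun j _ => ?_
    rw [add_right_comm, h.1 _ (by omega)]
  · intro k hk
    simp only [_root_.shiftComb, mulVec_sum, mulVec_smul, ← smul_add, ← sum_add_distrib]
    exact sum_congr rfl fun j _ => by rw [h.2 _ (by omega)]

theorem IsStateTraj.congr {L : ℕ} {x : ℕ → Fin n → ℝ} {u u' : ℕ → Fin m → ℝ}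
    {y y' : ℕ → Fin p → ℝ} (h : IsStateTraj A B C D L x u y) (hu : ∀ k, k < L → u k = u' k)
    (hy : ∀ k, k < L → y k = y' k) : IsStateTraj A B C D L x u' y' :=
  ⟨fun k hk => hu k (by omega) ▸ h.1 k hk, fun k hk => hu k hk ▸ hy k hk ▸ h.2 k hk⟩

theorem IsStateTraj.output_eq {L : ℕ} {x x' : ℕ → Fin n → ℝ} {u u' : ℕ → Fin m → ℝ}
    {y y' : ℕ → Fin p → ℝ} (h : IsStateTraj A B C D L x u y)
    (h' : IsStateTraj A B C D L x' u' y') (h0 : x 0 = x' 0) (hu : ∀ k, k < L → u k = u' k) :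
    ∀ k, k < L → y k = y' k := by
  have hx : ∀ k, k < L → x k = x' k := by
    intro k
    induction k with
    | zero => exact fun _ => h0
    | succ k ih =>
      intro hk
      rw [h.1 k hk, h'.1 k hk, ih (by omega), hu k (by omega)]
  intro k hk
  rw [h.2 k hk, h'.2 k hk, hx k hk, hu k hk]

end Trajectory

theorem hankel_mulVec_apply {q L N : ℕ} (z : ℕ → Fin q → ℝ) (ν : Fin (N - L + 1) → ℝ)
    (i : Fin L) (a : Fin q) : (hankel L N z *ᵥ ν) (i, a) = shiftComb ν z i a := by
  simp only [hankel, mulVec, dotProduct, shiftComb, Finset.sum_apply, Pi.smul_apply,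
    smul_eq_mul, mul_comm]

theorem vecMul_hankel_apply {q L N : ℕ} (z : ℕ → Fin q → ℝ) (ξ : ℕ → Fin q → ℝ)
    (j : Fin (N - L + 1)) :
    ((fun ia : Fin L × Fin q => ξ ia.1 ia.2) ᵥ* hankel L N z) j
      = ∑ i ∈ range L, ξ i ⬝ᵥ z (i + j) := by
  rw [← Fin.sum_univ_eq_sum_range (fun i => ξ i ⬝ᵥ z (i + j))]
  simp only [vecMul, dotProduct, hankel, Fintype.sum_prod_type]

section FundamentalLemma

variable {n m : ℕ} (A : Matrix (Fin n) (Fin n) ℝ) (B : Matrix (Fin n) (Fin m) ℝ)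

theorem state_eq_pow_mulVec_add_sum {N : ℕ} {x : ℕ → Fin n → ℝ} {u : ℕ → Fin m → ℝ}
    (hx : ∀ k, k + 1 < N → x (k + 1) = A *ᵥ x k + B *ᵥ u k) (j k : ℕ) (hjk : j + k < N) :
    x (j + k) = A ^ k *ᵥ x j + ∑ i ∈ range k, (A ^ (k - 1 - i) * B) *ᵥ u (i + j) := by
  induction k generalizing j with
  | zero => simp
  | succ k ih =>
    rw [show j + (k + 1) = (j + 1) + k by ring, ih (j + 1) (by omega), hx j (by omega),
      sum_range_succ', mulVec_add, mulVec_mulVec, mulVec_mulVec, ← pow_succ, add_assoc,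
      add_comm ((A ^ k * B) *ᵥ u j)]
    congr 2
    · refine sum_congr rfl fun i _ => ?_
      rw [show k + 1 - 1 - (i + 1) = k - 1 - i by omega, add_right_comm, add_assoc]
    · simp

/-- The input coefficients of the relation `∑ i, ξ i ⬝ᵥ u (i + j + k) + η ⬝ᵥ x (j + k)` once
`x (j + k)` is expanded through the state equation in terms of `x j`. -/
def shiftRelation (ξ : ℕ → Fin m → ℝ) (η : Fin n → ℝ) (k : ℕ) : ℕ → Fin m → ℝ :=
  fun s => if s < k then η ᵥ* (A ^ (k - 1 - s) * B) else ξ (s - k)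

theorem sum_shiftRelation_dotProduct {L N : ℕ} {x : ℕ → Fin n → ℝ} {u : ℕ → Fin m → ℝ}
    (hx : ∀ k, k + 1 < N → x (k + 1) = A *ᵥ x k + B *ᵥ u k) {ξ : ℕ → Fin m → ℝ}
    (hξ : ∀ i, L ≤ i → ξ i = 0) (η : Fin n → ℝ) {j k : ℕ} (hk : k ≤ n) (hjk : j + k < N) :
    ∑ s ∈ range (L + n), shiftRelation A B ξ η k s ⬝ᵥ u (s + j) + η ᵥ* A ^ k ⬝ᵥ x j
      = ∑ i ∈ range L, ξ i ⬝ᵥ u (i + (j + k)) + η ⬝ᵥ x (j + k) := by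
  rw [show L + n = k + L + (n - k) by omega, sum_range_add, sum_range_add,
    state_eq_pow_mulVec_add_sum A B hx j k hjk, dotProduct_add, dotProduct_sum]
  have htail :
      ∑ t ∈ range (n - k), shiftRelation A B ξ η k (k + L + t) ⬝ᵥ u (k + L + t + j) = 0 :=
    sum_eq_zero fun t _ => by
      rw [shiftRelation, if_neg (by omega), hξ _ (by omega), zero_dotProduct]
  have hfront : ∀ i ∈ range k, shiftRelation A B ξ η k i ⬝ᵥ u (i + j)
      = η ⬝ᵥ (A ^ (k - 1 - i) * B) *ᵥ u (i + j) := fun i hi => by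
    rw [shiftRelation, if_pos (mem_range.mp hi), dotProduct_mulVec]
  have hmid : ∀ i ∈ range L, shiftRelation A B ξ η k (k + i) ⬝ᵥ u (k + i + j)
      = ξ i ⬝ᵥ u (i + (j + k)) := fun i _ => by
    simp only [shiftRelation, if_neg (Nat.not_lt.mpr (Nat.le_add_right k i)),
      Nat.add_sub_cancel_left]
    congr 2
    ring
  rw [htail, sum_congr rfl hfront, sum_congr rfl hmid, dotProduct_mulVec]
  ring

theorem sum_dotProduct_sum_smul_shiftRelation_eq_zero {L N : ℕ} {x : ℕ → Fin n → ℝ}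
    {u : ℕ → Fin m → ℝ} (hx : ∀ k, k + 1 < N → x (k + 1) = A *ᵥ x k + B *ᵥ u k)
    {ξ : ℕ → Fin m → ℝ} (hξ : ∀ i, L ≤ i → ξ i = 0) {η : Fin n → ℝ} {c : ℕ → ℝ} (hL : 0 < L)
    (hc : ∑ k ∈ range (n + 1), c k • A ^ k = 0)
    (hrel : ∀ j, j + L ≤ N → ∑ i ∈ range L, ξ i ⬝ᵥ u (i + j) + η ⬝ᵥ x j = 0)
    {j : ℕ} (hj : j + (L + n) ≤ N) :
    ∑ s ∈ range (L + n), (∑ k ∈ range (n + 1), c k • shiftRelation A B ξ η k s) ⬝ᵥ u (s + j)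
      = 0 := by
  have hshift : ∀ k ∈ range (n + 1),
      ∑ s ∈ range (L + n), shiftRelation A B ξ η k s ⬝ᵥ u (s + j) = -(η ᵥ* A ^ k ⬝ᵥ x j) :=
    fun k hk => by
      have hk := mem_range.mp hk
      have h := sum_shiftRelation_dotProduct A B hx hξ η (j := j) (k := k) (by omega) (by omega)
      rw [hrel (j + k) (by omega)] at h
      linarith
  calc ∑ s ∈ range (L + n), (∑ k ∈ range (n + 1), c k • shiftRelation A B ξ η k s) ⬝ᵥ u (s + j)
      = ∑ k ∈ range (n + 1), c k * ∑ s ∈ range (L + n),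
          shiftRelation A B ξ η k s ⬝ᵥ u (s + j) := by
        simp only [sum_dotProduct, smul_dotProduct, smul_eq_mul, mul_sum]
        exact sum_comm
    _ = -(η ᵥ* (∑ k ∈ range (n + 1), c k • A ^ k) ⬝ᵥ x j) := by
        simp only [sum_congr rfl fun k hk => congrArg (c k * ·) (hshift k hk), vecMul_sum,
          vecMul_smul, sum_dotProduct, smul_dotProduct, smul_eq_mul, mul_neg, sum_neg_distrib]
    _ = 0 := by rw [hc, vecMul_zero, zero_dotProduct, neg_zero]

theorem eq_zero_of_sum_smul_shiftRelation_eq_zero {L : ℕ} {ξ : ℕ → Fin m → ℝ}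
    (hξ : ∀ i, L ≤ i → ξ i = 0) (η : Fin n → ℝ) {c : ℕ → ℝ} (hcn : c n = 1)
    (hζ : ∀ s, s < L + n → ∑ k ∈ range (n + 1), c k • shiftRelation A B ξ η k s = 0) :
    ξ = 0 := by
  have hstep : ∀ k, k < L → (∀ i, k + 1 ≤ i → ξ i = 0) → ξ k = 0 := by
    intro k hk hlater
    have hsum := hζ (n + k) (by omega)
    rw [sum_range_succ, sum_eq_zero, zero_add] at hsum
    · simpa [shiftRelation, hcn] using hsum
    · intro k' hk'
      have := mem_range.mp hk'
      rw [shiftRelation, if_neg (by omega), hlater _ (by omega), smul_zero]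
  have hall := Nat.decreasingInduction' (P := fun k => ∀ i, k ≤ i → ξ i = 0)
    (fun k hk _ ih i hi => hi.eq_or_lt.elim (fun h => h ▸ hstep k hk ih) (ih i)) L.zero_le hξ
  exact funext fun i => hall i i.zero_le

theorem vecMul_pow_mul_eq_zero_of_sum_smul_shiftRelation_eq_zero (η : Fin n → ℝ) {c : ℕ → ℝ}
    (hcn : c n = 1)
    (hζ : ∀ s, s < n → ∑ k ∈ range (n + 1), c k • shiftRelation A B 0 η k s = 0) :
    ∀ r, r < n → η ᵥ* (A ^ r * B) = 0 := by
  intro r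
  induction r using Nat.strong_induction_on with
  | _ r ih =>
    intro hr
    have hsum := hζ (n - 1 - r) (by omega)
    rw [sum_range_succ, sum_eq_zero, zero_add] at hsum
    · simpa [shiftRelation, hcn, show n - 1 - r < n by omega,
        show n - 1 - (n - 1 - r) = r by omega] using hsum
    · intro k hk
      have := mem_range.mp hk
      simp only [shiftRelation]
      split_ifs
      · rw [ih _ (by omega) (by omega), smul_zero]
      · simp

theorem eq_zero_of_input_state_relation {L N : ℕ} (hL : 0 < L) (hLN : L + n ≤ N)
    {x : ℕ → Fin n → ℝ} {u : ℕ → Fin m → ℝ}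
    (hx : ∀ k, k + 1 < N → x (k + 1) = A *ᵥ x k + B *ᵥ u k)
    (hctrb : Injective (ctrbMat A B n).vecMul) (hpe : Injective (hankel (L + n) N u).vecMul)
    {ξ : ℕ → Fin m → ℝ} (hξ : ∀ i, L ≤ i → ξ i = 0) {η : Fin n → ℝ}
    (hrel : ∀ j, j + L ≤ N → ∑ i ∈ range L, ξ i ⬝ᵥ u (i + j) + η ⬝ᵥ x j = 0) :
    ξ = 0 ∧ η = 0 := by
  obtain ⟨c, hcn, hc⟩ : ∃ c : ℕ → ℝ, c n = 1 ∧ ∑ k ∈ range (n + 1), c k • A ^ k = 0 := by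
    simpa using A.exists_monic_sum_smul_pow_eq_zero
  set ζ : ℕ → Fin m → ℝ := fun s => ∑ k ∈ range (n + 1), c k • shiftRelation A B ξ η k s
  have hζ : ∀ s, s < L + n → ζ s = 0 := by
    have hker := @hpe (fun sa => ζ sa.1 sa.2) 0 <| funext fun j => by
      dsimp only
      rw [zero_vecMul, Pi.zero_apply, vecMul_hankel_apply u ζ]
      exact sum_dotProduct_sum_smul_shiftRelation_eq_zero A B hx hξ hL hc hrel (by omega)
    exact fun s hs => funext fun a => congrFun hker (⟨s, hs⟩, a)
  obtain rfl := eq_zero_of_sum_smul_shiftRelation_eq_zero A B hξ η hcn hζ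
  have hηB := vecMul_pow_mul_eq_zero_of_sum_smul_shiftRelation_eq_zero A B η hcn
    fun s hs => hζ s (by omega)
  refine ⟨rfl, hctrb (funext fun ra => ?_)⟩
  dsimp only
  rw [zero_vecMul]
  exact congrFun (hηB ra.1 ra.1.isLt) ra.2

def stateMat (L N : ℕ) (x : ℕ → Fin n → ℝ) : Matrix (Fin n) (Fin (N - L + 1)) ℝ :=
  fun l j => x j l

theorem mulVec_fromRows_hankel_stateMat_surjective {L N : ℕ} (hL : 0 < L) (hLN : L + n ≤ N)
    {x : ℕ → Fin n → ℝ} {u : ℕ → Fin m → ℝ}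
    (hx : ∀ k, k + 1 < N → x (k + 1) = A *ᵥ x k + B *ᵥ u k) (hctrb : (ctrbMat A B n).rank = n)
    (hpe : (hankel (L + n) N u).rank = m * (L + n)) :
    Surjective (fromRows (hankel L N u) (stateMat L N x)).mulVec := by
  refine mulVec_surjective_of_vecMul_injective _ ?_
  rw [← coe_vecMulLinear, injective_iff_map_eq_zero]
  intro w hw
  simp only [coe_vecMulLinear, vecMul_fromRows] at hw
  set ξ : ℕ → Fin m → ℝ := fun i a => if h : i < L then w (.inl (⟨i, h⟩, a)) else 0
  have hwξ : w ∘ Sum.inl = fun ia : Fin L × Fin m => ξ ia.1 ia.2 :=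
    funext fun ia => by simp [ξ]
  obtain ⟨hξ, hη⟩ := eq_zero_of_input_state_relation A B hL hLN hx
    (vecMul_injective_of_rank_eq_card _ (by rw [hctrb, Fintype.card_fin]))
    (vecMul_injective_of_rank_eq_card _ (by simp [hpe, mul_comm]))
    (ξ := ξ) (fun i hi => funext fun a => dif_neg (Nat.not_lt.mpr hi)) (η := w ∘ Sum.inr)
    fun j hj => by
      have hcol := congrFun hw ⟨j, by omega⟩
      rwa [Pi.add_apply, hwξ, vecMul_hankel_apply] at hcol
  funext r
  rcases r with ia | l
  · simpa [ξ, ia.1.isLt] using congrFun (congrFun hξ ia.1) ia.2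
  · exact congrFun hη l

end FundamentalLemma

theorem steady_state_manifold_general {n m p N : ℕ} (hN : 2 * n + 1 ≤ N)
    (A : Matrix (Fin n) (Fin n) ℝ) (B : Matrix (Fin n) (Fin m) ℝ)
    (C : Matrix (Fin p) (Fin n) ℝ) (D : Matrix (Fin p) (Fin m) ℝ)
    (hctrb : (ctrbMat A B n).rank = n)
    (ud : ℕ → Fin m → ℝ) (yd : ℕ → Fin p → ℝ)
    (hdata : IsTraj A B C D N ud yd)
    (hpe : (hankel (2 * n + 1) N ud).rank = m * (2 * n + 1))
    (us : Fin m → ℝ) (ys : Fin p → ℝ) :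
    IsEquilibrium A B C D us ys ↔
      ∃ ν : Fin (N - (n + 1) + 1) → ℝ,
        (∀ i : Fin (n + 1), ∀ a, (hankel (n + 1) N ud).mulVec ν (i, a) = us a) ∧
        (∀ i : Fin (n + 1), ∀ a, (hankel (n + 1) N yd).mulVec ν (i, a) = ys a) := by
  obtain ⟨xd, hdata⟩ : ∃ x, IsStateTraj A B C D N x ud yd := hdata
  have hwindow : (n + 1) + (N - (n + 1) + 1) ≤ N + 1 := by omega
  simp only [hankel_mulVec_apply]
  constructor
  · rintro ⟨xe, hequil⟩
    rw [show 2 * n + 1 = (n + 1) + n by ring] at hpe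
    obtain ⟨ν, hν⟩ := mulVec_fromRows_hankel_stateMat_surjective A B (Nat.succ_pos n) (by omega)
      hdata.1 hctrb hpe (Sum.elim (fun ia => us ia.2) (xe 0))
    rw [fromRows_mulVec] at hν
    have hu : ∀ (i : Fin (n + 1)) a, shiftComb ν ud i a = us a := fun i a => by
      simpa [hankel_mulVec_apply] using congrFun hν (.inl (i, a))
    have hx0 : shiftComb ν xd 0 = xe 0 := funext fun l => by
      simpa [stateMat, shiftComb, mulVec, dotProduct, mul_comm] using congrFun hν (.inr l)
    refine ⟨ν, hu, fun i a => ?_⟩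
    have hy := (hdata.shiftComb hwindow ν).output_eq hequil hx0
      (fun k hk => funext (hu ⟨k, hk⟩)) i i.isLt
    exact congrFun hy a
  · rintro ⟨ν, hu, hy⟩
    exact ⟨shiftComb ν xd, (hdata.shiftComb hwindow ν).congr (fun k hk => funext (hu ⟨k, hk⟩))
      fun k hk => funext (hy ⟨k, hk⟩)⟩

/-- **Data-driven characterization of the steady-state manifold (Lemma 1).**
If `(A,B)` is controllable, `(A,C)` is observable, `{u^d_k, y^d_k}_{k=0}^{N-1}` is a
trajectory of the system and `u^d` is persistently exciting of order `2n+1`, then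
`(u^s, y^s)` is an equilibrium of the system if and only if there exists `ν ∈ ℝ^{N-n}` with
`H_{n+1}(u^d) ν = 1_{n+1} ⊗ u^s` and `H_{n+1}(y^d) ν = 1_{n+1} ⊗ y^s`. -/
theorem steady_state_manifold {n m p N : ℕ} (hN : 2 * n + 1 ≤ N)
    (A : Matrix (Fin n) (Fin n) ℝ) (B : Matrix (Fin n) (Fin m) ℝ)
    (C : Matrix (Fin p) (Fin n) ℝ) (D : Matrix (Fin p) (Fin m) ℝ)
    (hctrb : (ctrbMat A B n).rank = n) (hobsv : (obsvMat A C n).rank = n)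
    (ud : ℕ → Fin m → ℝ) (yd : ℕ → Fin p → ℝ)
    (hdata : IsTraj A B C D N ud yd)
    (hpe : (hankel (2 * n + 1) N ud).rank = m * (2 * n + 1))
    (us : Fin m → ℝ) (ys : Fin p → ℝ) :
    IsEquilibrium A B C D us ys ↔
      ∃ ν : Fin (N - (n + 1) + 1) → ℝ,
        (∀ i : Fin (n + 1), ∀ a, (hankel (n + 1) N ud).mulVec ν (i, a) = us a) ∧
        (∀ i : Fin (n + 1), ∀ a, (hankel (n + 1) N yd).mulVec ν (i, a) = ys a) :=
  steady_state_manifold_general hN A B C D hctrb ud yd hdata hpe us ys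
end

section
/- Consider the discrete-time LTI system x_{t+1} = A x_t + B u_t, y_t = C x_t + D u_t with (A,C) observable. An input-output pair (u^s, y^s) ∈ ℝ^m × ℝ^p is an equilibrium of the system (i.e., the constant sequence {(u^s, y^s)}_{k=0}^{n} of length n+1 is a trajectory) if and only if there exists a state x^s ∈ ℝ^n with x^s = A x^s + B u^s and y^s = C x^s + D u^s. -/
/-- If `(A,C)` is observable, an input-output pair `(u^s, y^s)` is an equilibrium of the
system if and only if there exists a state `x^s` with `x^s = A x^s + B u^s` and
`y^s = C x^s + D u^s`. -/
theorem equilibrium_iff_steady_state {n m p : ℕ}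
    (A : Matrix (Fin n) (Fin n) ℝ) (B : Matrix (Fin n) (Fin m) ℝ)
    (C : Matrix (Fin p) (Fin n) ℝ) (D : Matrix (Fin p) (Fin m) ℝ)
    (hobsv : (obsvMat A C n).rank = n)
    (us : Fin m → ℝ) (ys : Fin p → ℝ) :
    IsEquilibrium A B C D us ys ↔
      ∃ xs : Fin n → ℝ, xs = A.mulVec xs + B.mulVec us ∧ ys = C.mulVec xs + D.mulVec us := by
  constructor
  · rintro ⟨x, hx, hy⟩
    refine ⟨x 0, ?_, ?_⟩
    · rcases Nat.eq_zero_or_pos n with hn | hn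
      · subst hn; exact Subsingleton.elim _ _
      -- d := x 1 - x 0
      set d : Fin n → ℝ := x 1 - x 0 with hd
      have hstep : ∀ k, k < n → x (k + 1) - x k = (A ^ k).mulVec d := by
        intro k hk
        induction k with
        | zero => simp [hd]
        | succ j ih =>
          have hj : j < n := Nat.lt_of_succ_lt hk
          have h1 := hx j (by omega)
          have h2 := hx (j + 1) (by omega)
          have e : x (j + 1 + 1) - x (j + 1) = A.mulVec (x (j + 1) - x j) := by
            rw [h1] at h2
            rw [h2, h1, Matrix.mulVec_sub, Matrix.mulVec_add]
            abel
          rw [e, ih hj, Matrix.mulVec_mulVec, ← pow_succ']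
      have hC : ∀ k, k < n → C.mulVec ((A ^ k).mulVec d) = 0 := by
        intro k hk
        have h1 := hy k (by omega)
        have h2 := hy (k + 1) (by omega)
        have : C.mulVec (x (k + 1)) = C.mulVec (x k) := by
          have := h1.symm.trans h2
          have := add_right_cancel this
          exact this.symm
        rw [← hstep k hk, Matrix.mulVec_sub, this, sub_self]
      have hmv : (obsvMat A C n).mulVec d = 0 := by
        funext ij
        obtain ⟨i, j⟩ := ij
        have h := congrFun (hC i i.isLt) j
        rw [Matrix.mulVec_mulVec] at h
        exact h
      have hker : LinearMap.ker (obsvMat A C n).mulVecLin = ⊥ := by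
        have h1 := LinearMap.finrank_range_add_finrank_ker (obsvMat A C n).mulVecLin
        rw [Module.finrank_fin_fun] at h1
        have h2 : Matrix.rank (obsvMat A C n)
            = Module.finrank ℝ (LinearMap.range (obsvMat A C n).mulVecLin) := rfl
        rw [← h2, hobsv] at h1
        have : Module.finrank ℝ (LinearMap.ker (obsvMat A C n).mulVecLin) = 0 := by omega
        exact Submodule.finrank_eq_zero.mp this
      have hd0 : d = 0 := by
        have : d ∈ LinearMap.ker (obsvMat A C n).mulVecLin := by
          simp [LinearMap.mem_ker, Matrix.mulVecLin_apply, hmv]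
        rw [hker] at this
        simpa using this
      have h10 : x 1 = x 0 := by
        have := sub_eq_zero.mp hd0
        exact this
      have := hx 0 (by omega)
      rw [h10] at this
      exact this
    · exact hy 0 (by omega)
  · rintro ⟨xs, h1, h2⟩
    exact ⟨fun _ => xs, fun k _ => h1, fun k _ => h2⟩
end

section
/- Consider the discrete-time LTI system x_{t+1} = A x_t + B u_t, y_t = C x_t + D u_t with (A,C) observable, and let (u^s, y^s) be an equilibrium of the system. If {u_k, y_k}_{k=0}^{L-1} is a trajectory of the system with L ≥ n such that u_k = u^s for all k = 0,…,L-1 and y_k = y^s for k = 0,…,n-1, then y_k = y^s for all k = 0,…,L-1 (a system held at an equilibrium over n steps remains at that equilibrium when the equilibrium input is kept applied). -/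
lemma rank_mulVec_eq_zero {q : Type*} [Fintype q] {n : ℕ} (M : Matrix q (Fin n) ℝ)
    (h : M.rank = n) (v : Fin n → ℝ) (hv : M.mulVec v = 0) : v = 0 := by
  have hker : v ∈ LinearMap.ker M.mulVecLin := by
    simpa [Matrix.mulVecLin_apply] using hv
  have hrk : Module.finrank ℝ (LinearMap.range M.mulVecLin) = n := h
  have hsum := LinearMap.finrank_range_add_finrank_ker M.mulVecLin
  rw [hrk] at hsum
  have h0 : Module.finrank ℝ (LinearMap.ker M.mulVecLin) = 0 := by
    have : Module.finrank ℝ (Fin n → ℝ) = n := by simp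
    omega
  have hbot : LinearMap.ker M.mulVecLin = ⊥ := Submodule.finrank_eq_zero.mp h0
  rw [hbot] at hker
  simpa using hker

lemma state_pow {n : ℕ} (A : Matrix (Fin n) (Fin n) ℝ) (w : ℕ → Fin n → ℝ) (N : ℕ)
    (h : ∀ k, k + 1 < N → w (k + 1) = A.mulVec (w k)) :
    ∀ k < N, w k = (A ^ k).mulVec (w 0) := by
  intro k
  induction k with
  | zero => intro _; simp
  | succ k ih =>
    intro hk
    rw [h k hk, ih (by omega), Matrix.mulVec_mulVec, ← pow_succ']

lemma obs_zero {n p : ℕ} (A : Matrix (Fin n) (Fin n) ℝ) (C : Matrix (Fin p) (Fin n) ℝ)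
    (w0 : Fin n → ℝ) (h : ∀ k < n, C.mulVec ((A ^ k).mulVec w0) = 0) :
    (obsvMat A C n).mulVec w0 = 0 := by
  funext ij
  obtain ⟨i, j⟩ := ij
  have e : (obsvMat A C n).mulVec w0 (i, j) = (C * A ^ (i : ℕ)).mulVec w0 j := rfl
  rw [e, ← Matrix.mulVec_mulVec, h i i.isLt]
  rfl

/-- If `(A,C)` is observable, `(u^s, y^s)` is an equilibrium, and a trajectory of length
`L ≥ n` applies the input `u^s` at every step and has output `y^s` during the first `n`
steps, then its output equals `y^s` at every step: a system held at an equilibrium over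
`n` steps remains at that equilibrium when the equilibrium input is kept applied. -/
theorem stays_at_equilibrium {n m p L : ℕ} (hL : n ≤ L)
    (A : Matrix (Fin n) (Fin n) ℝ) (B : Matrix (Fin n) (Fin m) ℝ)
    (C : Matrix (Fin p) (Fin n) ℝ) (D : Matrix (Fin p) (Fin m) ℝ)
    (hobsv : (obsvMat A C n).rank = n)
    (us : Fin m → ℝ) (ys : Fin p → ℝ)
    (heq : IsEquilibrium A B C D us ys)
    (u : ℕ → Fin m → ℝ) (y : ℕ → Fin p → ℝ)
    (htraj : IsTraj A B C D L u y)
    (hu : ∀ k < L, u k = us) (hy : ∀ k < n, y k = ys) :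
    ∀ k < L, y k = ys := by
  obtain ⟨z, hz1, hz2⟩ := heq
  obtain ⟨x, hx1, hx2⟩ := htraj
  -- Step 1: the equilibrium state is a fixed point of the dynamics
  have hfix : A.mulVec (z 0) + B.mulVec us = z 0 := by
    rcases Nat.eq_zero_or_pos n with hn | hn
    · subst hn; funext i; exact absurd i.isLt (by omega)
    · -- show z is constant using observability
      set wz : ℕ → Fin n → ℝ := fun j => z (j + 1) - z j with hwzdef
      have hwzrec : ∀ j, j + 1 < n → wz (j + 1) = A.mulVec (wz j) := by
        intro j hj
        simp only [hwzdef]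
        rw [hz1 (j + 1) (by omega), hz1 j (by omega), Matrix.mulVec_sub]
        abel
      have hCwz : ∀ j < n, C.mulVec ((A ^ j).mulVec (wz 0)) = 0 := by
        intro j hj
        rw [← state_pow A wz n hwzrec j hj]
        have h1 := hz2 (j + 1) (by omega)
        have h2 := hz2 j (by omega)
        simp only [hwzdef, Matrix.mulVec_sub]
        have : C.mulVec (z (j + 1)) = C.mulVec (z j) := by
          have := h1.symm.trans h2
          have := add_right_cancel this
          exact this
        rw [this]; abel
      have hwz0 : wz 0 = 0 :=
        rank_mulVec_eq_zero _ hobsv _ (obs_zero A C _ hCwz)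
      have hz10 : z 1 = z 0 := by
        have : z 1 - z 0 = 0 := hwz0
        linear_combination (norm := abel) this
      rw [← hz1 0 (by omega), hz10]
  have hys : ys = C.mulVec (z 0) + D.mulVec us := hz2 0 (by omega)
  -- Step 2: the trajectory state equals the equilibrium state
  set w : ℕ → Fin n → ℝ := fun k => x k - z 0 with hwdef
  have hwrec : ∀ k, k + 1 < L → w (k + 1) = A.mulVec (w k) := by
    intro k hk
    simp only [hwdef]
    have hB : B.mulVec us = z 0 - A.mulVec (z 0) := eq_sub_of_add_eq' hfix
    rw [hx1 k hk, hu k (by omega), hB, Matrix.mulVec_sub]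
    abel
  have hCw : ∀ j < n, C.mulVec ((A ^ j).mulVec (w 0)) = 0 := by
    intro j hj
    rw [← state_pow A w L hwrec j (by omega)]
    have h1 := hx2 j (by omega)
    rw [hu j (by omega), hy j hj, hys] at h1
    have : C.mulVec (x j) = C.mulVec (z 0) := add_right_cancel h1.symm
    simp only [hwdef, Matrix.mulVec_sub, this]
    abel
  have hw0 : w 0 = 0 :=
    rank_mulVec_eq_zero _ hobsv _ (obs_zero A C _ hCw)
  intro k hk
  have hwk : w k = 0 := by
    rw [state_pow A w L hwrec k hk, hw0, Matrix.mulVec_zero]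
  have hxk : x k = z 0 := by
    have : x k - z 0 = 0 := hwk
    linear_combination (norm := abel) this
  rw [hx2 k hk, hu k hk, hxk, hys]
end

section
/- Let E = ℝ^d with the Euclidean inner product, Z ⊆ E a linear subspace with orthogonal projection P_Z, and f : E → ℝ differentiable, α-strongly convex, and l-smooth (i.e., ∇f is l-Lipschitz) with 0 < α ≤ l. Let ζ be the minimizer of f over Z and let 0 < γ ≤ 2/(α+l). Then for every z ∈ Z, the projected gradient step z⁺ = P_Z(z - γ ∇f(z)) satisfies ‖z⁺ - ζ‖ ≤ (1 - αγ) ‖z - ζ‖. -/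
open scoped RealInnerProductSpace

/-!
Subtracting `α/2 ‖·‖²` turns `f` into a convex, `(l - α)`-smooth function, whose gradient is
cocoercive; this yields Nesterov's inequality
`‖∇f x - ∇f y‖² + α l ‖x - y‖² ≤ (α + l) ⟪∇f x - ∇f y, x - y⟫`, which together with
`α ‖x - y‖ ≤ ‖∇f x - ∇f y‖` makes the unconstrained step `x ↦ x - γ ∇f x` a `(1 - αγ)`-contraction
for `γ ≤ 2/(α + l)`. Since `ζ` minimizes `f` on `Z`, `∇f ζ ⊥ Z`, so `ζ = P_Z (ζ - γ ∇f ζ)`, and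
`P_Z` is `1`-Lipschitz.
-/

variable {E : Type*} [NormedAddCommGroup E] [InnerProductSpace ℝ E]

def QuadraticLowerBound (φ : E → ℝ) (G : E → E) (α : ℝ) : Prop :=
  ∀ a b, φ b + ⟪G b, a - b⟫ + α / 2 * ‖a - b‖ ^ 2 ≤ φ a

def QuadraticUpperBound (φ : E → ℝ) (G : E → E) (L : ℝ) : Prop :=
  ∀ a b, φ a ≤ φ b + ⟪G b, a - b⟫ + L / 2 * ‖a - b‖ ^ 2

theorem le_mul_of_forall_two_mul_sub_mul_sq_mul_le {L N S : ℝ} (hL : 0 ≤ L)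
    (h : ∀ t, (2 * t - L * t ^ 2) * N ≤ S) : N ≤ L * S := by
  rcases hL.eq_or_lt with rfl | hL
  · have hS : 0 ≤ S := by simpa using h 0
    by_contra! hpos
    rw [zero_mul] at hpos
    have := h ((S + 1) / N)
    rw [zero_mul, sub_zero, mul_assoc, div_mul_cancel₀ _ hpos.ne'] at this
    linarith
  · have := h L⁻¹
    field_simp at this
    linarith

section

variable {φ : E → ℝ} {G : E → E} {α l L : ℝ}

theorem QuadraticUpperBound.add_inner_add_mul_norm_sq_le (hconv : QuadraticLowerBound φ G 0)
    (hsmooth : QuadraticUpperBound φ G L) (x y : E) (t : ℝ) :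
    φ x + ⟪G x, y - x⟫ + (t - L / 2 * t ^ 2) * ‖G y - G x‖ ^ 2 ≤ φ y := by
  set w := y - t • (G y - G x)
  have hw_conv := hconv w x
  have hw_smooth := hsmooth w y
  have hwy : w - y = -(t • (G y - G x)) := by simp [w]
  have hwx : w - x = (y - x) - t • (G y - G x) := by simp [w]; abel
  rw [hwy, inner_neg_right, real_inner_smul_right, norm_neg, norm_smul, mul_pow,
    Real.norm_eq_abs, sq_abs] at hw_smooth
  rw [hwx, inner_sub_right, real_inner_smul_right, zero_div, zero_mul, add_zero] at hw_conv
  have hN : ⟪G y, G y - G x⟫ - ⟪G x, G y - G x⟫ = ‖G y - G x‖ ^ 2 := by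
    rw [← inner_sub_left, real_inner_self_eq_norm_sq]
  linear_combination hw_conv + hw_smooth - t * hN

theorem QuadraticUpperBound.norm_sub_sq_le (hconv : QuadraticLowerBound φ G 0)
    (hsmooth : QuadraticUpperBound φ G L) (hL : 0 ≤ L) (x y : E) :
    ‖G x - G y‖ ^ 2 ≤ L * ⟪G x - G y, x - y⟫ := by
  refine le_mul_of_forall_two_mul_sub_mul_sq_mul_le hL fun t => ?_
  have hxy := hsmooth.add_inner_add_mul_norm_sq_le hconv x y t
  have hyx := hsmooth.add_inner_add_mul_norm_sq_le hconv y x t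
  rw [norm_sub_rev] at hxy
  have hS : ⟪G x, y - x⟫ + ⟪G y, x - y⟫ = -⟪G x - G y, x - y⟫ := by
    rw [← neg_sub x y, inner_neg_right, inner_sub_left]; ring
  linarith

theorem half_mul_norm_sub_sq (α : ℝ) (a b : E) :
    α / 2 * ‖a - b‖ ^ 2 = α / 2 * ‖a‖ ^ 2 - α / 2 * ‖b‖ ^ 2 - α * ⟪b, a - b⟫ := by
  rw [norm_sub_sq_real, inner_sub_right, real_inner_self_eq_norm_sq, real_inner_comm]
  ring

theorem QuadraticLowerBound.sub_half_mul_norm_sq (h : QuadraticLowerBound φ G α) :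
    QuadraticLowerBound (fun u => φ u - α / 2 * ‖u‖ ^ 2) (fun u => G u - α • u) 0 := by
  intro a b
  have := h a b
  rw [half_mul_norm_sub_sq] at this
  simp only [inner_sub_left, real_inner_smul_left, zero_div, zero_mul, add_zero]
  linarith

theorem QuadraticUpperBound.sub_half_mul_norm_sq (h : QuadraticUpperBound φ G l) :
    QuadraticUpperBound (fun u => φ u - α / 2 * ‖u‖ ^ 2) (fun u => G u - α • u) (l - α) := by
  intro a b
  have := h a b
  have hsplit := half_mul_norm_sub_sq α a b
  simp only [inner_sub_left, real_inner_smul_left]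
  linear_combination this + hsplit

theorem QuadraticLowerBound.mul_norm_sub_sq_le_inner (h : QuadraticLowerBound φ G α) (x y : E) :
    α * ‖x - y‖ ^ 2 ≤ ⟪G x - G y, x - y⟫ := by
  have hxy := h x y
  have hyx := h y x
  rw [← neg_sub x y, inner_neg_right, norm_neg] at hyx
  rw [inner_sub_left]
  linarith

theorem QuadraticLowerBound.mul_norm_sub_le (h : QuadraticLowerBound φ G α) (x y : E) :
    α * ‖x - y‖ ≤ ‖G x - G y‖ := by
  rcases (norm_nonneg (x - y)).eq_or_lt with h0 | hpos
  · rw [← h0, mul_zero]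
    exact norm_nonneg _
  · refine le_of_mul_le_mul_right ?_ hpos
    calc α * ‖x - y‖ * ‖x - y‖ = α * ‖x - y‖ ^ 2 := by ring
      _ ≤ ⟪G x - G y, x - y⟫ := h.mul_norm_sub_sq_le_inner x y
      _ ≤ ‖G x - G y‖ * ‖x - y‖ := real_inner_le_norm _ _

theorem QuadraticUpperBound.norm_sub_sq_add_le (hsc : QuadraticLowerBound φ G α)
    (hsm : QuadraticUpperBound φ G l) (hαl : α ≤ l) (x y : E) :
    ‖G x - G y‖ ^ 2 + α * l * ‖x - y‖ ^ 2 ≤ (α + l) * ⟪G x - G y, x - y⟫ := by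
  have h := (hsm.sub_half_mul_norm_sq (α := α)).norm_sub_sq_le hsc.sub_half_mul_norm_sq
    (sub_nonneg.2 hαl) x y
  have hshift : G x - α • x - (G y - α • y) = (G x - G y) - α • (x - y) := by module
  rw [hshift] at h
  generalize G x - G y = D at h ⊢
  generalize x - y = v at h ⊢
  rw [norm_sub_sq_real, inner_sub_left, norm_smul, mul_pow, Real.norm_eq_abs, sq_abs,
    real_inner_smul_right, real_inner_smul_left, real_inner_self_eq_norm_sq] at h
  linear_combination h

theorem QuadraticUpperBound.norm_sub_sub_smul_sub_le (hsc : QuadraticLowerBound φ G α)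
    (hsm : QuadraticUpperBound φ G l) (hα : 0 < α) (hαl : α ≤ l) {γ : ℝ} (hγ : 0 ≤ γ)
    (hγ2 : γ ≤ 2 / (α + l)) (x y : E) :
    ‖x - y - γ • (G x - G y)‖ ≤ (1 - α * γ) * ‖x - y‖ := by
  have hαl0 : 0 < α + l := by linarith
  have hγαl : γ * (α + l) ≤ 2 := (le_div_iff₀ hαl0).1 hγ2
  have hrate : 0 ≤ 1 - α * γ := by nlinarith
  set N := ‖G x - G y‖ ^ 2
  set X := ‖x - y‖ ^ 2
  set S := ⟪G x - G y, x - y⟫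
  have hcoco : N + α * l * X ≤ (α + l) * S := hsm.norm_sub_sq_add_le hsc hαl x y
  have hlower : α ^ 2 * X ≤ N := by
    rw [← mul_pow]
    exact pow_le_pow_left₀ (by positivity) (hsc.mul_norm_sub_le x y) 2
  have hexpand : ‖x - y - γ • (G x - G y)‖ ^ 2 = X - 2 * γ * S + γ ^ 2 * N := by
    rw [norm_sub_sq_real, real_inner_smul_right, norm_smul, mul_pow, Real.norm_eq_abs, sq_abs,
      real_inner_comm]
    ring
  have hdefect : (α + l) * ((1 - α * γ) ^ 2 * X - (X - 2 * γ * S + γ ^ 2 * N)) =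
      2 * γ * ((α + l) * S - N - α * l * X) + γ * (2 - γ * (α + l)) * (N - α ^ 2 * X) := by
    ring
  have hsq : ‖x - y - γ • (G x - G y)‖ ^ 2 ≤ (1 - α * γ) ^ 2 * X := by
    rw [hexpand, ← sub_nonneg, ← mul_nonneg_iff_of_pos_left hαl0, hdefect]
    have h1 : 0 ≤ 2 * γ * ((α + l) * S - N - α * l * X) := by
      apply mul_nonneg <;> linarith
    have h2 : 0 ≤ γ * (2 - γ * (α + l)) * (N - α ^ 2 * X) := by
      apply mul_nonneg (mul_nonneg _ _) <;> linarith
    linarith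
  rw [← mul_pow] at hsq
  exact (pow_le_pow_iff_left₀ (norm_nonneg _) (by positivity) two_ne_zero).1 hsq

end

theorem IsMinOn.gradient_mem_orthogonal [CompleteSpace E] {f : E → ℝ} {Z : Submodule ℝ E}
    {ζ : E} (hmin : IsMinOn f Z ζ) (hf : DifferentiableAt ℝ f ζ) (hζ : ζ ∈ Z) :
    gradient f ζ ∈ Zᗮ := by
  intro w hw
  have hcurve : HasDerivAt (fun t : ℝ => ζ + t • w) w 0 := by
    simpa using ((hasDerivAt_id (0 : ℝ)).smul_const w).const_add ζ
  have hf0 : HasFDerivAt f (InnerProductSpace.toDual ℝ E (gradient f ζ)) (ζ + (0 : ℝ) • w) := by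
    simpa using hf.hasGradientAt.hasFDerivAt
  have hline : HasDerivAt (fun t : ℝ => f (ζ + t • w)) ⟪gradient f ζ, w⟫ 0 := by
    exact hf0.comp_hasDerivAt 0 hcurve
  rw [real_inner_comm]
  refine IsLocalMin.hasDerivAt_eq_zero (Filter.Eventually.of_forall fun t => ?_) hline
  simpa using hmin (Z.add_mem hζ (Z.smul_mem t hw))

theorem Submodule.norm_orthogonalProjectionOnto_sub_le (K : Submodule ℝ E)
    [K.HasOrthogonalProjection] {p v : E} (hp : p ∈ K) (hv : v ∈ Kᗮ) (u : E) :
    ‖(K.orthogonalProjectionOnto u : E) - p‖ ≤ ‖u - (p + v)‖ := by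
  have hproj : K.starProjection (p + v) = p := eq_starProjection_of_mem_orthogonal' hp hv rfl
  calc ‖(K.orthogonalProjectionOnto u : E) - p‖ = ‖K.starProjection (u - (p + v))‖ := by
        rw [map_sub, hproj]; rfl
    _ ≤ ‖u - (p + v)‖ := K.norm_starProjection_apply_le _

theorem projected_gradient_contraction_general {d : ℕ}
    (Z : Submodule ℝ (EuclideanSpace ℝ (Fin d)))
    (f : EuclideanSpace ℝ (Fin d) → ℝ) (α l γ : ℝ)
    (hα : 0 < α) (hαl : α ≤ l)
    (hdiff : ∀ x, DifferentiableAt ℝ f x)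
    (hsc : ∀ z₁ z₂ : EuclideanSpace ℝ (Fin d),
      f z₂ + ⟪gradient f z₂, z₁ - z₂⟫ + α / 2 * ‖z₁ - z₂‖ ^ 2 ≤ f z₁)
    (hsm : ∀ z₁ z₂ : EuclideanSpace ℝ (Fin d),
      f z₁ ≤ f z₂ + ⟪gradient f z₂, z₁ - z₂⟫ + l / 2 * ‖z₁ - z₂‖ ^ 2)
    (hγ : 0 < γ) (hγ2 : γ ≤ 2 / (α + l))
    (ζ : EuclideanSpace ℝ (Fin d)) (hζZ : ζ ∈ Z) (hζmin : ∀ z ∈ Z, f ζ ≤ f z)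
    (z : EuclideanSpace ℝ (Fin d)) :
    ‖(Z.orthogonalProjectionOnto (z - γ • gradient f z) : EuclideanSpace ℝ (Fin d)) - ζ‖
      ≤ (1 - α * γ) * ‖z - ζ‖ := by
  have horth : gradient f ζ ∈ Zᗮ := (isMinOn_iff.2 hζmin).gradient_mem_orthogonal (hdiff ζ) hζZ
  calc _ ≤ ‖z - γ • gradient f z - (ζ + (-γ) • gradient f ζ)‖ :=
        Z.norm_orthogonalProjectionOnto_sub_le hζZ (Zᗮ.smul_mem _ horth) _
    _ = ‖z - ζ - γ • (gradient f z - gradient f ζ)‖ := by congr 1; module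
    _ ≤ (1 - α * γ) * ‖z - ζ‖ :=
        QuadraticUpperBound.norm_sub_sub_smul_sub_le hsc hsm hα hαl hγ.le hγ2 z ζ

/-- **Contraction of one projected gradient descent step** (cf. Nesterov, Thm 2.2.14).
If `f` is `α`-strongly convex and `l`-smooth with `0 < α ≤ l`, `ζ` is the minimizer of `f`
over a linear subspace `Z`, and `0 < γ ≤ 2/(α+l)`, then for every `z ∈ Z` the projected
gradient step `z⁺ = P_Z(z - γ ∇f(z))` satisfies `‖z⁺ - ζ‖ ≤ (1 - αγ) ‖z - ζ‖`. -/
theorem projected_gradient_contraction {d : ℕ}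
    (Z : Submodule ℝ (EuclideanSpace ℝ (Fin d)))
    (f : EuclideanSpace ℝ (Fin d) → ℝ) (α l γ : ℝ)
    (hα : 0 < α) (hαl : α ≤ l)
    (hdiff : ∀ x, DifferentiableAt ℝ f x)
    (hsc : ∀ z₁ z₂ : EuclideanSpace ℝ (Fin d),
      f z₂ + ⟪gradient f z₂, z₁ - z₂⟫ + α / 2 * ‖z₁ - z₂‖ ^ 2 ≤ f z₁)
    (hsm : ∀ z₁ z₂ : EuclideanSpace ℝ (Fin d),
      f z₁ ≤ f z₂ + ⟪gradient f z₂, z₁ - z₂⟫ + l / 2 * ‖z₁ - z₂‖ ^ 2)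
    (hγ : 0 < γ) (hγ2 : γ ≤ 2 / (α + l))
    (ζ : EuclideanSpace ℝ (Fin d)) (hζZ : ζ ∈ Z) (hζmin : ∀ z ∈ Z, f ζ ≤ f z)
    (z : EuclideanSpace ℝ (Fin d)) (hz : z ∈ Z) :
    ‖(Z.orthogonalProjectionOnto (z - γ • gradient f z) : EuclideanSpace ℝ (Fin d)) - ζ‖
      ≤ (1 - α * γ) * ‖z - ζ‖ :=
  projected_gradient_contraction_general Z f α l γ hα hαl hdiff hsc hsm hγ hγ2 ζ hζZ hζmin z
end
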